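/- Let E be the elliptic curve over the finite field 𝔽₁₆₉ with 13² elements given by the Weierstrass equation y² + y = x³ + x² − 4x + 2 (coefficients a₁ = 0, a₂ = 1, a₃ = 1, a₄ = −4, a₆ = 2; this equation has nonzero discriminant). Then the 3-torsion subgroup {P ∈ E(𝔽₁₆₉) : 3·P = O} is isomorphic, as an abelian group, to (ℤ/3ℤ) × (ℤ/3ℤ); in particular all nine 3-torsion points of E are rational over 𝔽₁₆₉. -/

import Mathlib

/-!
If `2P ≠ 0` for `P = (x, y)`, then `3P = 0` iff `2P = -P` iff `x(2P) = x(P)`, and the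
duplication formula turns this into `Ψ₃(x) = 0`. So the `3`-torsion consists of `O` and at most
two points over each of the at most four roots of `Ψ₃`: it has at most `9` elements, and being
killed by `3` it is an `𝔽₃`-vector space of dimension at most `2`.

Here `Ψ₃ = 3 (x - 4) (x - 6) (x - 9) (x - 10)` over `𝔽₁₃`, and with `t = √2 ∈ 𝔽₁₆₉` the points
`(4, 6 + 5t)` and `(6, 6 + 4t)` are `3`-torsion points with distinct `x`-coordinates, hence
linearly independent, so the dimension is exactly `2`.
-/

open Polynomial

lemma CharP.ofNat_ne_zero_of_not_dvd {R : Type*} [AddMonoidWithOne R] (p : ℕ) [CharP R p]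
    (n : ℕ) [n.AtLeastTwo] (h : ¬p ∣ n) : (ofNat(n) : R) ≠ 0 :=
  fun h0 ↦ h <| (CharP.cast_eq_zero_iff R p n).mp (by exact_mod_cast h0)

lemma ZMod.linearIndependent_pair_of_ne_neg {V : Type*} [AddCommGroup V] [Module (ZMod 3) V]
    {u v : V} (hu : u ≠ 0) (hv : v ≠ 0) (hvu : v ≠ u) (hvu' : v ≠ -u) :
    LinearIndependent (ZMod 3) ![u, v] := by
  rw [LinearIndependent.pair_iff' hu]
  intro a
  obtain rfl | rfl | rfl : a = 0 ∨ a = 1 ∨ a = -1 := by decide +revert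
  · simpa [eq_comm] using hv
  · simpa [eq_comm] using hvu
  · simpa [eq_comm] using hvu'

lemma nonempty_addEquiv_zmod_prod_of_linearIndependent {p : ℕ} [hp : Fact p.Prime]
    {V : Type*} [AddCommGroup V] [Module (ZMod p) V] [Finite V] (hV : Nat.card V ≤ p ^ 2)
    {u v : V} (huv : LinearIndependent (ZMod p) ![u, v]) :
    Nonempty (V ≃+ ZMod p × ZMod p) := by
  have h2 : 2 ≤ Module.finrank (ZMod p) V := by simpa using huv.fintype_card_le_finrank
  have h2' : Module.finrank (ZMod p) V ≤ 2 := by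
    rw [Module.natCard_eq_pow_finrank (K := ZMod p), Nat.card_zmod] at hV
    exact (Nat.pow_le_pow_iff_right hp.out.one_lt).mp hV
  have hrank : Module.finrank (ZMod p) V = Module.finrank (ZMod p) (ZMod p × ZMod p) := by
    rw [Module.finrank_prod, Module.finrank_self (ZMod p)]
    omega
  exact ⟨(LinearEquiv.ofFinrankEq (R := ZMod p) V (ZMod p × ZMod p) hrank).toAddEquiv⟩

namespace WeierstrassCurve

variable {F : Type*} [Field F] [DecidableEq F] {W : WeierstrassCurve F} {x y : F}

namespace Affine

-- The duplication formula `x(2P) = x(P) - Ψ₃(x) / ψ₂(x, y) ^ 2`, cleared of denominators.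
lemma addX_slope_self_sub_mul_sq (h : W.toAffine.Equation x y) (hy : y ≠ W.toAffine.negY x y) :
    (W.toAffine.addX x x (W.toAffine.slope x x y y) - x) * (y - W.toAffine.negY x y) ^ 2 =
      -W.Ψ₃.eval x := by
  rw [equation_iff] at h
  rw [slope_of_Y_ne rfl hy, addX, div_pow]
  field_simp
  simp only [negY, Ψ₃, b₂, b₄, b₆, b₈, eval_add, eval_mul, eval_pow, eval_C, eval_X, eval_ofNat]
  linear_combination (-(W.a₁ ^ 2 + 4 * W.a₂ + 12 * x)) * h

lemma Point.three_nsmul_some_eq_zero_iff (h : W.toAffine.Nonsingular x y) :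
    3 • some x y h = 0 ↔ y ≠ W.toAffine.negY x y ∧ W.Ψ₃.eval x = 0 := by
  rw [succ_nsmul, two_nsmul, add_eq_zero_iff_eq_neg]
  by_cases hy : y = W.toAffine.negY x y
  · refine iff_of_false ?_ fun h' ↦ h'.1 hy
    rw [Point.add_self_of_Y_eq hy, eq_comm, neg_eq_zero]
    exact Point.some_ne_zero h
  have hdbl : some x y h + some x y h = -some x y h ↔
      W.toAffine.addX x x (W.toAffine.slope x x y y) = x := by
    refine ⟨fun hneg ↦ Point.X_eq_iff.mpr
      (.inr (by rwa [← Point.add_self_of_Y_ne (h₁ := h) hy])), fun hx ↦ ?_⟩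
    rcases Point.X_eq_iff.mp hx with hself | hneg
    · rw [← Point.add_self_of_Y_ne (h₁ := h) hy] at hself
      exact absurd (add_eq_left.mp hself) (Point.some_ne_zero h)
    · rwa [← Point.add_self_of_Y_ne (h₁ := h) hy] at hneg
  rw [hdbl, ← sub_eq_zero, ← neg_eq_zero (a := W.Ψ₃.eval x), ← addX_slope_self_sub_mul_sq h.1 hy,
    mul_eq_zero_iff_right (pow_ne_zero 2 (sub_ne_zero.mpr hy))]
  exact ⟨fun hΨ ↦ ⟨hy, hΨ⟩, And.right⟩

end Affine

abbrev threeTorsion (W : WeierstrassCurve F) : AddSubgroup W.toAffine.Point :=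
  (DistribSMul.toAddMonoidHom W.toAffine.Point (3 : ℤ)).ker

lemma mem_threeTorsion {P : W.toAffine.Point} : P ∈ W.threeTorsion ↔ 3 • P = 0 := by
  rw [AddMonoidHom.mem_ker, DistribSMul.toAddMonoidHom_apply, ← natCast_zsmul]
  rfl

lemma some_mem_threeTorsion_iff (h : W.toAffine.Nonsingular x y) :
    Affine.Point.some x y h ∈ W.threeTorsion ↔ y ≠ W.toAffine.negY x y ∧ W.Ψ₃.eval x = 0 :=
  mem_threeTorsion.trans (Affine.Point.three_nsmul_some_eq_zero_iff h)

noncomputable instance : Module (ZMod 3) W.threeTorsion :=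
  AddCommGroup.zmodModule fun P ↦ Subtype.ext (mem_threeTorsion.mp P.2)

noncomputable def pointsOverRootsΨ₃ (W : WeierstrassCurve F) : Finset (F × F) :=
  W.Ψ₃.roots.toFinset.biUnion fun x ↦
    (W.toAffine.polynomial.map (evalRingHom x)).roots.toFinset.image (x, ·)

lemma card_pointsOverRootsΨ₃_le : W.pointsOverRootsΨ₃.card ≤ 8 := by
  have hfiber (x : F) :
      ((W.toAffine.polynomial.map (evalRingHom x)).roots.toFinset.image (x, ·)).card ≤ 2 :=
    Finset.card_image_le.trans <| (Multiset.toFinset_card_le _).trans <| (card_roots' _).trans <|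
      natDegree_map_le.trans W.toAffine.natDegree_polynomial.le
  have hroots : W.Ψ₃.roots.toFinset.card ≤ 4 :=
    (Multiset.toFinset_card_le _).trans <| (card_roots' _).trans W.natDegree_Ψ₃_le
  calc W.pointsOverRootsΨ₃.card
      ≤ ∑ x ∈ W.Ψ₃.roots.toFinset,
          ((W.toAffine.polynomial.map (evalRingHom x)).roots.toFinset.image (x, ·)).card :=
        Finset.card_biUnion_le
    _ ≤ W.Ψ₃.roots.toFinset.card * 2 := Finset.sum_le_card_nsmul _ _ _ fun x _ ↦ hfiber x
    _ ≤ 8 := by omega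

lemma mem_pointsOverRootsΨ₃ (h3 : (3 : F) ≠ 0) (h : W.toAffine.Equation x y)
    (hx : W.Ψ₃.eval x = 0) : (x, y) ∈ W.pointsOverRootsΨ₃ := by
  simp only [pointsOverRootsΨ₃, Finset.mem_biUnion, Multiset.mem_toFinset, Finset.mem_image,
    Prod.mk.injEq]
  refine ⟨x, (mem_roots (W.Ψ₃_ne_zero h3)).mpr hx, y,
    (mem_roots (W.toAffine.monic_polynomial.map _).ne_zero).mpr ?_, rfl, rfl⟩
  rwa [IsRoot, map_evalRingHom_eval]

lemma coords_mem_insertNone_pointsOverRootsΨ₃ (h3 : (3 : F) ≠ 0) {P : W.toAffine.Point}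
    (hP : P ∈ W.threeTorsion) :
    Option.map Subtype.val (W.toAffine.nonsingularPointEquiv P) ∈
      W.pointsOverRootsΨ₃.insertNone := by
  cases P with
  | zero => simp [Affine.nonsingularPointEquiv_zero]
  | some x y h =>
    simpa [Affine.nonsingularPointEquiv_some] using
      mem_pointsOverRootsΨ₃ h3 h.1 ((some_mem_threeTorsion_iff h).mp hP).2

lemma finite_threeTorsion_and_natCard_le (h3 : (3 : F) ≠ 0) :
    Finite W.threeTorsion ∧ Nat.card W.threeTorsion ≤ 9 := by
  let coords : W.threeTorsion → W.pointsOverRootsΨ₃.insertNone := fun P ↦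
    ⟨Option.map Subtype.val (W.toAffine.nonsingularPointEquiv P),
      coords_mem_insertNone_pointsOverRootsΨ₃ h3 P.2⟩
  have hinj : Function.Injective coords := fun P Q hPQ ↦ Subtype.ext <|
    W.toAffine.nonsingularPointEquiv.injective <|
      Option.map_injective Subtype.val_injective (congrArg Subtype.val hPQ)
  refine ⟨Finite.of_injective coords hinj, (Nat.card_le_card_of_injective coords hinj).trans ?_⟩
  rw [Nat.card_eq_fintype_card, Fintype.card_coe, Finset.card_insertNone]
  linarith [W.card_pointsOverRootsΨ₃_le]

lemma linearIndependent_threeTorsion_of_X_ne {x₁ y₁ x₂ y₂ : F}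
    {h₁ : W.toAffine.Nonsingular x₁ y₁} {h₂ : W.toAffine.Nonsingular x₂ y₂} {P Q : W.threeTorsion}
    (hP : (P : W.toAffine.Point) = .some x₁ y₁ h₁) (hQ : (Q : W.toAffine.Point) = .some x₂ y₂ h₂)
    (hx : x₁ ≠ x₂) : LinearIndependent (ZMod 3) ![P, Q] := by
  have hQP : ¬(_ ∨ _) := mt (Affine.Point.X_eq_iff (h₁ := h₂) (h₂ := h₁)).mpr hx.symm
  rw [not_or, ← hP, ← hQ] at hQP
  refine ZMod.linearIndependent_pair_of_ne_neg ?_ ?_ ?_ ?_ <;> rw [ne_eq, ← Subtype.coe_inj]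
  · exact hP ▸ Affine.Point.some_ne_zero h₁
  · exact hQ ▸ Affine.Point.some_ne_zero h₂
  · exact hQP.1
  · exact hQP.2

end WeierstrassCurve

section

variable [Fact (Nat.Prime 13)]

local notation "𝔽₁₆₉" => GaloisField 13 2

-- Euler's criterion: `2 ^ (#𝔽₁₆₉ / 2) = (2 ^ 12) ^ 7 = 1`, as `2 ^ 12 = 1` already in `𝔽₁₃`.
lemma exists_sq_eq_two : ∃ t : 𝔽₁₆₉, t ^ 2 = 2 := by
  let := Fintype.ofFinite 𝔽₁₆₉
  have hcard : Fintype.card 𝔽₁₆₉ = 13 ^ 2 := by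
    rw [Fintype.card_eq_nat_card, GaloisField.card 13 2 two_ne_zero]
  have hchar : ringChar 𝔽₁₆₉ ≠ 2 := by rw [ringChar.eq 𝔽₁₆₉ 13]; norm_num
  have h12 : (2 : 𝔽₁₆₉) ^ 12 = 1 := by
    linear_combination 315 * CharP.ofNat_eq_zero 𝔽₁₆₉ 13
  obtain ⟨t, ht⟩ := (FiniteField.isSquare_iff hchar
    (CharP.ofNat_ne_zero_of_not_dvd 13 2 (by norm_num))).mpr <| by
      rw [hcard, show 13 ^ 2 / 2 = 12 * 7 by norm_num, pow_mul, h12, one_pow]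
  exact ⟨t, by rw [sq, ht]⟩

open WeierstrassCurve

noncomputable def W571 : WeierstrassCurve 𝔽₁₆₉ :=
  { a₁ := 0, a₂ := 1, a₃ := 1, a₄ := -4, a₆ := 2 }

lemma W571_Δ : W571.Δ = -571 := by
  simp only [Δ, b₂, b₄, b₆, b₈, W571]
  norm_num

lemma W571_Δ_ne_zero : W571.Δ ≠ 0 := by
  rw [W571_Δ, neg_ne_zero]
  exact CharP.ofNat_ne_zero_of_not_dvd 13 571 (by norm_num)

lemma W571_eval_Ψ₃ (x : 𝔽₁₆₉) :
    W571.Ψ₃.eval x = 3 * (x - 4) * (x - 6) * (x - 9) * (x - 10) := by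
  simp only [Ψ₃, b₂, b₄, b₆, b₈, W571, eval_add, eval_mul, eval_pow, eval_C, eval_X, eval_ofNat]
  linear_combination (7 * x ^ 3 - 72 * x ^ 2 + 315 * x - 499) * CharP.ofNat_eq_zero 𝔽₁₆₉ 13

open Classical in
lemma W571_exists_linearIndependent :
    ∃ P Q : W571.threeTorsion, LinearIndependent (ZMod 3) ![P, Q] := by
  obtain ⟨t, ht⟩ := exists_sq_eq_two
  have h13 := CharP.ofNat_eq_zero 𝔽₁₆₉ 13
  have ht0 : t ≠ 0 := by
    rintro rfl
    exact CharP.ofNat_ne_zero_of_not_dvd 13 2 (by norm_num) (by simpa using ht.symm)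
  have h₁ : W571.toAffine.Nonsingular 4 (6 + 5 * t) := by
    refine (Affine.equation_iff_nonsingular_of_Δ_ne_zero W571_Δ_ne_zero).mp ?_
    rw [Affine.equation_iff]
    simp only [W571]
    linear_combination 25 * ht + (2 + 5 * t) * h13
  have h₂ : W571.toAffine.Nonsingular 6 (6 + 4 * t) := by
    refine (Affine.equation_iff_nonsingular_of_Δ_ne_zero W571_Δ_ne_zero).mp ?_
    rw [Affine.equation_iff]
    simp only [W571]
    linear_combination 16 * ht + (-12 + 4 * t) * h13
  have hy₁ : 6 + 5 * t ≠ W571.toAffine.negY 4 (6 + 5 * t) := by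
    simp only [Affine.negY, W571]
    intro h
    refine mul_ne_zero (CharP.ofNat_ne_zero_of_not_dvd 13 10 (by norm_num)) ht0 ?_
    linear_combination h - h13
  have hy₂ : 6 + 4 * t ≠ W571.toAffine.negY 6 (6 + 4 * t) := by
    simp only [Affine.negY, W571]
    intro h
    refine mul_ne_zero (CharP.ofNat_ne_zero_of_not_dvd 13 8 (by norm_num)) ht0 ?_
    linear_combination h - h13
  refine ⟨⟨_, (some_mem_threeTorsion_iff h₁).mpr ⟨hy₁, by rw [W571_eval_Ψ₃]; ring⟩⟩,
    ⟨_, (some_mem_threeTorsion_iff h₂).mpr ⟨hy₂, by rw [W571_eval_Ψ₃]; ring⟩⟩,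
    linearIndependent_threeTorsion_of_X_ne rfl rfl fun h ↦ ?_⟩
  exact CharP.ofNat_ne_zero_of_not_dvd 13 2 (by norm_num) (by linear_combination h.symm)

end

open Classical in
/-- The elliptic curve `y² + y = x³ + x² - 4x + 2` over the field `𝔽₁₆₉` with `13² = 169`
elements has nonzero discriminant, and the `3`-torsion subgroup
`{P ∈ E(𝔽₁₆₉) : 3 • P = 0}` of its group of `𝔽₁₆₉`-rational points is isomorphic, as an
abelian group, to `(ℤ/3ℤ) × (ℤ/3ℤ)`; in particular all nine `3`-torsion points are rational
over `𝔽₁₆₉`. -/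
theorem ogg_stmt3 [Fact (Nat.Prime 13)] :
    letI W : WeierstrassCurve (GaloisField 13 2) :=
      { a₁ := 0, a₂ := 1, a₃ := 1, a₄ := -4, a₆ := 2 }
    W.Δ ≠ 0 ∧ Nonempty
      ((DistribMulAction.toAddMonoidHom W.toAffine.Point (3 : ℤ)).ker ≃+
        (ZMod 3) × (ZMod 3)) := by
  obtain ⟨_, hcard⟩ :=
    W571.finite_threeTorsion_and_natCard_le (CharP.ofNat_ne_zero_of_not_dvd 13 3 (by norm_num))
  obtain ⟨P, Q, hPQ⟩ := W571_exists_linearIndependent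
  have hiso : Nonempty (W571.threeTorsion ≃+ ZMod 3 × ZMod 3) :=
    nonempty_addEquiv_zmod_prod_of_linearIndependent hcard hPQ
  exact ⟨W571_Δ_ne_zero, hiso⟩
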